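/- The size of a minimum vertex cover of the violation graph VG_f equals ε_f · |D|, where ε_f · |D| is the minimum number of points at which f must be modified to make it (α,β)-Lipschitz. -/

import Mathlib

/-!
An `(α,β)`-Lipschitz `g` satisfies `g x - g y ≤ d(x,y)`: walk by unit steps from `hcd(x,y)` up to
`x` and up to `y`. Hence the points where `f ≠ g` cover every violated pair. Conversely, off a
vertex cover `U` of the violation graph, `f` has no violated pair, and the McShane-type extension
`g x = min_{z ∉ U} (f z + d(x,z))` agrees with `f` off `U`; it is `(α,β)`-Lipschitz because a unit
step of `x` changes each `d(x,z)` by an amount in `[α, β]`.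
-/

/-- pseudo-distance on `(Fin n → Fin k)`:
`β‖x - hcd(x,y)‖₁ - α‖y - hcd(x,y)‖₁` with `hcd` the coordinatewise min. -/
noncomputable def fd {n k : ℕ} (α β : ℝ) (x y : Fin n → Fin k) : ℝ :=
  β * ∑ i, (((x i : ℕ) : ℝ) - ((min (x i) (y i) : Fin k) : ℕ)) -
  α * ∑ i, (((y i : ℕ) : ℝ) - ((min (x i) (y i) : Fin k) : ℕ))

/-- violation weight of a pair. -/
noncomputable def vw {n k : ℕ} (α β : ℝ) (f : (Fin n → Fin k) → ℝ)
    (x y : Fin n → Fin k) : ℝ :=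
  max (f x - f y - fd α β x y) (f y - f x - fd α β y x)

/-- the `(α,β)`-Lipschitz (bounded-derivative) property. -/
def IsABLip {n k : ℕ} (α β : ℝ) (g : (Fin n → Fin k) → ℝ) : Prop :=
  ∀ x y : Fin n → Fin k,
    (∃ i, (y i : ℕ) = (x i : ℕ) + 1 ∧ ∀ j, j ≠ i → y j = x j) →
      α ≤ g y - g x ∧ g y - g x ≤ β

theorem Fintype.sum_sub_sum_of_eq_off {ι M : Type*} [Fintype ι] [AddCommGroup M]
    {F G : ι → M} (i : ι) (h : ∀ j, j ≠ i → F j = G j) :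
    ∑ j, F j - ∑ j, G j = F i - G i := by
  rw [← Finset.sum_sub_distrib,
    Finset.sum_eq_single i (fun j _ hj => by rw [h j hj, sub_self]) (by simp)]

theorem Nat.sInf_eq_sInf_of_forall_exists_le {A B : Set ℕ}
    (hAB : ∀ a ∈ A, ∃ b ∈ B, b ≤ a) (hBA : ∀ b ∈ B, ∃ a ∈ A, a ≤ b) :
    sInf A = sInf B := by
  rcases B.eq_empty_or_nonempty with rfl | hB
  · have : A = ∅ := Set.eq_empty_of_forall_notMem fun a ha => by
      obtain ⟨b, hb, -⟩ := hAB a ha; exact hb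
    simp [this]
  obtain ⟨a, ha, hab⟩ := hBA _ (Nat.sInf_mem hB)
  obtain ⟨b, hb, hba⟩ := hAB _ (Nat.sInf_mem ⟨a, ha⟩)
  exact le_antisymm (le_trans (Nat.sInf_le ha) hab) (le_trans (Nat.sInf_le hb) hba)

noncomputable def fdCoord (α β a b : ℝ) : ℝ :=
  β * (a - min a b) - α * (b - min a b)

theorem fdCoord_add_one_sub_mem_Icc {α β : ℝ} (hαβ : α ≤ β) (a b : ℝ) :
    fdCoord α β (a + 1) b - fdCoord α β a b ∈ Set.Icc α β := by
  unfold fdCoord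
  rcases le_total b a with hba | hab
  · rw [min_eq_right hba, min_eq_right (by linarith)]
    constructor <;> linarith
  rcases le_total b (a + 1) with hb | hb
  · -- the increment `β (a + 1 - b) + α (b - a)` is a convex combination of `α` and `β`
    rw [min_eq_left hab, min_eq_right hb]
    constructor <;> nlinarith
  · rw [min_eq_left hab, min_eq_left hb]
    constructor <;> linarith

section Grid

variable {n k : ℕ}

def IsUnitStep (x y : Fin n → Fin k) : Prop :=
  ∃ i, (y i : ℕ) = (x i : ℕ) + 1 ∧ ∀ j, j ≠ i → y j = x j

noncomputable def coordSum (x : Fin n → Fin k) : ℝ :=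
  ∑ i, ((x i : ℕ) : ℝ)

theorem fd_eq_sum_fdCoord (α β : ℝ) (x y : Fin n → Fin k) :
    fd α β x y = ∑ i, fdCoord α β (x i : ℕ) (y i : ℕ) := by
  simp only [fd, fdCoord, Finset.sum_sub_distrib, ← Finset.mul_sum, Fin.coe_min, Nat.cast_min]

theorem fd_self (α β : ℝ) (x : Fin n → Fin k) : fd α β x x = 0 := by
  simp [fd]

theorem IsUnitStep.lt {x y : Fin n → Fin k} (h : IsUnitStep x y) : x < y := by
  obtain ⟨i, hi, hne⟩ := h
  refine Pi.lt_def.2 ⟨fun j => ?_, i, Fin.lt_def.2 (by omega)⟩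
  rcases eq_or_ne j i with rfl | hj
  · exact Fin.le_def.2 (by omega)
  · exact (hne j hj).ge

theorem exists_isUnitStep_le_of_lt {z w : Fin n → Fin k} (h : z < w) :
    ∃ z', IsUnitStep z z' ∧ z' ≤ w := by
  obtain ⟨hle, i, hi⟩ := Pi.lt_def.1 h
  have hi' : (z i : ℕ) + 1 < k := lt_of_le_of_lt (Fin.lt_def.1 hi) (w i).isLt
  refine ⟨Function.update z i ⟨_, hi'⟩, ⟨i, by simp, fun j hj => by simp [hj]⟩, fun j => ?_⟩
  rcases eq_or_ne j i with rfl | hj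
  · simpa [Fin.le_def] using Fin.lt_def.1 hi
  · simpa [hj] using hle j

theorem IsUnitStep.coordSum_eq {x y : Fin n → Fin k} (h : IsUnitStep x y) :
    coordSum y = coordSum x + 1 := by
  obtain ⟨i, hi, hne⟩ := h
  have := Fintype.sum_sub_sum_of_eq_off (F := fun j => ((y j : ℕ) : ℝ))
    (G := fun j => ((x j : ℕ) : ℝ)) i (fun j hj => by rw [hne j hj])
  simp only [hi, Nat.cast_add, Nat.cast_one] at this
  unfold coordSum
  linarith

theorem IsUnitStep.fd_sub_mem_Icc {α β : ℝ} (hαβ : α ≤ β) {x y : Fin n → Fin k}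
    (h : IsUnitStep x y) (z : Fin n → Fin k) :
    fd α β y z - fd α β x z ∈ Set.Icc α β := by
  obtain ⟨i, hi, hne⟩ := h
  rw [fd_eq_sum_fdCoord, fd_eq_sum_fdCoord,
    Fintype.sum_sub_sum_of_eq_off i (fun j hj => by rw [hne j hj]), hi, Nat.cast_add,
    Nat.cast_one]
  exact fdCoord_add_one_sub_mem_Icc hαβ _ _

variable {α β : ℝ}

theorem isABLip_const_mul_coordSum (hαβ : α ≤ β) :
    IsABLip α β (fun x : Fin n → Fin k => α * coordSum x) :=
  fun _ _ h => by
    beta_reduce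
    rw [IsUnitStep.coordSum_eq h]
    constructor <;> linarith

theorem IsABLip.bounds_of_le {g : (Fin n → Fin k) → ℝ} (hg : IsABLip α β g)
    {z w : Fin n → Fin k} (hzw : z ≤ w) :
    α * (coordSum w - coordSum z) ≤ g w - g z ∧ g w - g z ≤ β * (coordSum w - coordSum z) := by
  induction z using WellFoundedGT.induction with
  | ind z ih =>
  rcases hzw.eq_or_lt with rfl | hlt
  · simp
  obtain ⟨z', hstep, hz'w⟩ := exists_isUnitStep_le_of_lt hlt
  obtain ⟨ih₁, ih₂⟩ := ih z' hstep.lt hz'w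
  obtain ⟨hα, hβ⟩ := hg z z' hstep
  rw [hstep.coordSum_eq] at ih₁ ih₂
  constructor <;> linarith

theorem IsABLip.sub_le_fd {g : (Fin n → Fin k) → ℝ} (hg : IsABLip α β g)
    (x y : Fin n → Fin k) : g x - g y ≤ fd α β x y := by
  let m : Fin n → Fin k := fun i => min (x i) (y i)
  have hx := (hg.bounds_of_le (fun i => min_le_left _ _ : m ≤ x)).2
  have hy := (hg.bounds_of_le (fun i => min_le_right _ _ : m ≤ y)).1
  simp only [coordSum] at hx hy
  simp only [fd, Finset.sum_sub_distrib]
  linarith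

end Grid

section Extension

variable {n k : ℕ} {α β : ℝ} {f : (Fin n → Fin k) → ℝ} {T : Finset (Fin n → Fin k)}

noncomputable def fdExtension (α β : ℝ) (T : Finset (Fin n → Fin k)) (hT : T.Nonempty)
    (f : (Fin n → Fin k) → ℝ) (x : Fin n → Fin k) : ℝ :=
  T.inf' hT fun z => f z + fd α β x z

theorem fdExtension_eq_of_mem (hT : T.Nonempty)
    (hf : ∀ x ∈ T, ∀ y ∈ T, f x - f y ≤ fd α β x y) {x : Fin n → Fin k} (hx : x ∈ T) :
    fdExtension α β T hT f x = f x := by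
  refine le_antisymm ?_ (Finset.le_inf' _ _ fun y hy => by linarith [hf x hx y hy])
  calc fdExtension α β T hT f x ≤ f x + fd α β x x := Finset.inf'_le _ hx
    _ = f x := by rw [fd_self, add_zero]

theorem isABLip_fdExtension (hαβ : α ≤ β) (hT : T.Nonempty) :
    IsABLip α β (fdExtension α β T hT f) := by
  intro x y hxy
  constructor
  · have : fdExtension α β T hT f x + α ≤ fdExtension α β T hT f y :=
      Finset.le_inf' _ _ fun z hz => by
        have hz' : fdExtension α β T hT f x ≤ f z + fd α β x z := Finset.inf'_le _ hz
        linarith [(IsUnitStep.fd_sub_mem_Icc hαβ hxy z).1]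
    linarith
  · obtain ⟨z, hz, hmin⟩ := Finset.exists_mem_eq_inf' hT fun z => f z + fd α β x z
    have hyz : fdExtension α β T hT f y ≤ f z + fd α β y z := Finset.inf'_le _ hz
    have hxz : fdExtension α β T hT f x = f z + fd α β x z := hmin
    linarith [(IsUnitStep.fd_sub_mem_Icc hαβ hxy z).2]

theorem exists_isABLip_eqOn (hαβ : α ≤ β) (hf : ∀ x ∈ T, ∀ y ∈ T, f x - f y ≤ fd α β x y) :
    ∃ g, IsABLip α β g ∧ ∀ x ∈ T, g x = f x := by
  rcases T.eq_empty_or_nonempty with rfl | hT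
  · exact ⟨_, isABLip_const_mul_coordSum hαβ, by simp⟩
  · exact ⟨_, isABLip_fdExtension hαβ hT, fun x => fdExtension_eq_of_mem hT hf⟩

end Extension

section Cover

variable {n k : ℕ} {α β : ℝ} {f g : (Fin n → Fin k) → ℝ}

/-- `U` is a vertex cover of the violation graph of `f`. -/
def IsViolationCover (α β : ℝ) (f : (Fin n → Fin k) → ℝ) (U : Finset (Fin n → Fin k)) : Prop :=
  ∀ x y, 0 < vw α β f x y → x ∈ U ∨ y ∈ U

theorem IsABLip.vw_nonpos (hg : IsABLip α β g) (x y : Fin n → Fin k) : vw α β g x y ≤ 0 :=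
  max_le (by linarith [hg.sub_le_fd x y]) (by linarith [hg.sub_le_fd y x])

theorem isViolationCover_filter_ne (hg : IsABLip α β g) :
    IsViolationCover α β f (Finset.univ.filter fun x => f x ≠ g x) := by
  intro x y hxy
  by_contra! h
  simp only [Finset.mem_filter, Finset.mem_univ, true_and, not_not] at h
  have : vw α β f x y = vw α β g x y := by simp only [vw, h.1, h.2]
  linarith [hg.vw_nonpos x y]

theorem IsViolationCover.sub_le_fd {U : Finset (Fin n → Fin k)} (hU : IsViolationCover α β f U)
    {x y : Fin n → Fin k} (hx : x ∉ U) (hy : y ∉ U) : f x - f y ≤ fd α β x y := by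
  have : vw α β f x y ≤ 0 := not_lt.1 fun h => (hU x y h).elim hx hy
  exact sub_nonpos.1 (max_le_iff.1 this).1

theorem IsViolationCover.exists_isABLip_card_ne_le (hαβ : α ≤ β) {U : Finset (Fin n → Fin k)}
    (hU : IsViolationCover α β f U) :
    ∃ g, IsABLip α β g ∧ Nat.card {x // f x ≠ g x} ≤ U.card := by
  obtain ⟨g, hg, hgf⟩ := exists_isABLip_eqOn (T := Uᶜ) hαβ fun x hx y hy =>
    hU.sub_le_fd (Finset.mem_compl.1 hx) (Finset.mem_compl.1 hy)
  refine ⟨g, hg, ?_⟩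
  rw [Nat.card_eq_fintype_card, Fintype.card_subtype]
  refine Finset.card_le_card fun x hx => ?_
  by_contra hxU
  exact (Finset.mem_filter.1 hx).2 (hgf x (Finset.mem_compl.2 hxU)).symm

end Cover

/-- The minimum vertex cover of the violation graph equals the minimum number
of points at which `f` must be modified to become `(α,β)`-Lipschitz. -/
theorem min_vertex_cover_eq_distance {n k : ℕ} (α β : ℝ) (hαβ : α ≤ β)
    (f : (Fin n → Fin k) → ℝ) :
    sInf {m : ℕ | ∃ U : Finset (Fin n → Fin k),
        (∀ x y, 0 < vw α β f x y → x ∈ U ∨ y ∈ U) ∧ U.card = m} =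
    sInf {m : ℕ | ∃ g : (Fin n → Fin k) → ℝ, IsABLip α β g ∧
        Nat.card {x : Fin n → Fin k // f x ≠ g x} = m} := by
  refine Nat.sInf_eq_sInf_of_forall_exists_le ?_ ?_
  · rintro _ ⟨U, hU, rfl⟩
    obtain ⟨g, hg, hcard⟩ := IsViolationCover.exists_isABLip_card_ne_le hαβ hU
    exact ⟨_, ⟨g, hg, rfl⟩, hcard⟩
  · rintro _ ⟨g, hg, rfl⟩
    refine ⟨_, ⟨_, isViolationCover_filter_ne hg, rfl⟩, ?_⟩
    rw [Nat.card_eq_fintype_card, Fintype.card_subtype]
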